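/- If a principal H-bundle P over an n-dimensional manifold M admits a Cartan connection ω : TP → 𝔤 for some Lie algebra 𝔤 containing 𝔥 with dim 𝔤 = dim P, then P is geometrizable: there exists a representation ρ : H → GL(n,ℝ) such that the associated bundle P ×_H ℝⁿ is isomorphic to TM. Explicitly, the representation of H on 𝔤/𝔥 ≅ ℝⁿ induced by Ad realizes the isomorphism P ×_H (𝔤/𝔥) ≅ TM via [p, ω_p(X) mod 𝔥] ↦ π_*(X). -/

import Mathlib

/-! Since `ω_p` identifies `T_pP` with `𝔤` and, through the fundamental vector fields, the
vertical space `ker dπ_p` with `𝔥`, the surjection `dπ_p` descends to an isomorphism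
`𝔤/𝔥 ≅ T_{π p}M`. The equivariance `R_h^* ω = Ad(h⁻¹) ω` turns right translation into the
action of `Ad` on `𝔤/𝔥`, so these isomorphisms form an associated-bundle structure with fibre
`𝔤/𝔥`; any linear isomorphism `ℝⁿ ≅ 𝔤/𝔥` transports it to a representation on `ℝⁿ`. -/

open Function Module

/-- Transport of fibers of a family of modules along an equality of base points. -/
def vcast {M : Type*} (TM : M → Type*) [∀ x, AddCommGroup (TM x)] [∀ x, Module ℝ (TM x)]
    {x y : M} (e : x = y) : TM x ≃ₗ[ℝ] TM y := by
  subst e; exact LinearEquiv.refl ℝ (TM x)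

variable {H : Type*} [Group H]
variable {P M : Type*}
variable {TP : P → Type*} [∀ p, AddCommGroup (TP p)] [∀ p, Module ℝ (TP p)]
variable {TM : M → Type*} [∀ x, AddCommGroup (TM x)] [∀ x, Module ℝ (TM x)]

lemma vcast_symm_vcast {x y : M} (e : x = y) (v : TM x) :
    vcast TM e.symm (vcast TM e v) = v := by
  subst e; rfl

namespace Submodule

variable {R W U : Type*} [Ring R] [AddCommGroup W] [Module R W] [AddCommGroup U] [Module R U]

noncomputable def quotEquivOfKerEq (S : Submodule R W) (f : W →ₗ[R] U) (hf : Surjective f)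
    (hker : LinearMap.ker f = S) : (W ⧸ S) ≃ₗ[R] U :=
  (quotEquivOfEq S _ hker.symm).trans (f.quotKerEquivOfSurjective hf)

@[simp]
lemma quotEquivOfKerEq_mkQ (S : Submodule R W) (f : W →ₗ[R] U) (hf : Surjective f)
    (hker : LinearMap.ker f = S) (X : W) : S.quotEquivOfKerEq f hf hker (S.mkQ X) = f X :=
  rfl

end Submodule

lemma LinearEquiv.ker_comp_symm_eq_of_ker_eq_range {R V W U : Type*} [Ring R]
    [AddCommGroup V] [Module R V] [AddCommGroup W] [Module R W] [AddCommGroup U] [Module R U]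
    {S : Submodule R W} (ω : V ≃ₗ[R] W) (ι : S →ₗ[R] V) (hι : ∀ X, ω (ι X) = X)
    (d : V →ₗ[R] U) (hd : LinearMap.ker d = LinearMap.range ι) :
    LinearMap.ker (d ∘ₗ ω.symm.toLinearMap) = S := by
  ext X
  have hιX : ∀ Y : S, ι Y = ω.symm X ↔ (Y : W) = X := fun Y => by
    rw [ω.eq_symm_apply, hι]
  rw [LinearMap.mem_ker, LinearMap.comp_apply, LinearEquiv.coe_coe, ← LinearMap.mem_ker, hd,
    LinearMap.mem_range]
  simp only [hιX]
  exact ⟨fun ⟨Y, hY⟩ => hY ▸ Y.2, fun hX => ⟨⟨X, hX⟩, rfl⟩⟩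

noncomputable def Representation.transportAut {k G V F : Type*} [CommSemiring k] [Group G]
    [AddCommMonoid V] [Module k V] [AddCommMonoid F] [Module k F]
    (ρ : Representation k G V) (b : F ≃ₗ[k] V) : G →* (F ≃ₗ[k] F) :=
  (LinearMap.GeneralLinearGroup.generalLinearEquiv k F).toMonoidHom.comp
    ((LinearMap.GeneralLinearGroup.congrLinearEquiv b.symm).toMonoidHom.comp ρ.asGroupHom)

lemma Representation.transportAut_apply {k G V F : Type*} [CommSemiring k] [Group G]
    [AddCommMonoid V] [Module k V] [AddCommMonoid F] [Module k F]
    (ρ : Representation k G V) (b : F ≃ₗ[k] V) (g : G) (w : F) :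
    ρ.transportAut b g w = b.symm (ρ g (b w)) :=
  rfl

lemma exists_modelFiber_of_equivariant {Q F : Type*} [AddCommGroup Q] [Module ℝ Q]
    [AddCommGroup F] [Module ℝ F] (π : P → M) (act : P → H → P) (hπ : ∀ p h, π (act p h) = π p)
    (ρ : Representation ℝ H Q) (e : ∀ p : P, Q ≃ₗ[ℝ] TM (π p))
    (he : ∀ p h ξ, vcast TM (hπ p h) (e (act p h) ξ) = e p (ρ h ξ))
    (hF : Nonempty (F ≃ₗ[ℝ] Q)) :
    ∃ (ρF : H →* (F ≃ₗ[ℝ] F)) (fib : ∀ p : P, F ≃ₗ[ℝ] TM (π p)),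
      ∀ p h w, fib (act p h) w = vcast TM (hπ p h).symm (fib p (ρF h w)) := by
  obtain ⟨b⟩ := hF
  refine ⟨ρ.transportAut b, fun p => b.trans (e p), fun p h w => ?_⟩
  simp only [LinearEquiv.trans_apply, Representation.transportAut_apply,
    LinearEquiv.apply_symm_apply, ← he, vcast_symm_vcast]

lemma vcast_fiberMap_act_eq_mapQ {𝔤 : Type*} [AddCommGroup 𝔤] [Module ℝ 𝔤] {S : Submodule ℝ 𝔤}
    (Ad : H →* (𝔤 ≃ₗ[ℝ] 𝔤)) (hAd : ∀ h, S ≤ S.comap (Ad h).toLinearMap)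
    (π : P → M) (act : P → H → P) (hπ : ∀ p h, π (act p h) = π p)
    (dπ : ∀ p, TP p →ₗ[ℝ] TM (π p)) (dR : ∀ (p : P) (h : H), TP p ≃ₗ[ℝ] TP (act p h))
    (hcompat : ∀ p h v, dπ p v = vcast TM (hπ p h) (dπ (act p h) (dR p h v)))
    (ω : ∀ p : P, TP p ≃ₗ[ℝ] 𝔤)
    (hω_equiv : ∀ (p : P) (h : H) (v : TP p), ω (act p h) (dR p h v) = Ad h⁻¹ (ω p v))
    (e : ∀ p : P, (𝔤 ⧸ S) →ₗ[ℝ] TM (π p)) (he : ∀ p v, e p (S.mkQ (ω p v)) = dπ p v)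
    (p : P) (h : H) (ξ : 𝔤 ⧸ S) :
    vcast TM (hπ p h) (e (act p h) ξ) = e p (S.mapQ S (Ad h).toLinearMap (hAd h) ξ) := by
  obtain ⟨v, rfl⟩ : ∃ v, S.mkQ (ω (act p h) (dR p h v)) = ξ :=
    ((S.mkQ_surjective.comp (ω _).surjective).comp (dR p h).surjective) ξ
  have hAd_ω : Ad h (ω (act p h) (dR p h v)) = ω p v := by
    rw [hω_equiv, map_inv]
    exact (Ad h).apply_symm_apply _
  rw [he, ← hcompat, Submodule.mkQ_apply, Submodule.mapQ_apply, LinearEquiv.coe_coe, hAd_ω,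
    ← Submodule.mkQ_apply, he]

theorem cartan_connection_implies_geometrizable_general
    (n : ℕ)
    {𝔤 : Type*} [LieRing 𝔤] [LieAlgebra ℝ 𝔤] [FiniteDimensional ℝ 𝔤]
    (𝔥 : LieSubalgebra ℝ 𝔤)
    (Ad : H →* (𝔤 ≃ₗ[ℝ] 𝔤))
    (hAd : ∀ (h : H), ∀ X ∈ 𝔥.toSubmodule, Ad h X ∈ 𝔥.toSubmodule)
    (hn : finrank ℝ (𝔤 ⧸ 𝔥.toSubmodule) = n)
    (π : P → M) (act : P → H → P)
    (hπ : ∀ p h, π (act p h) = π p)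
    (dπ : ∀ p, TP p →ₗ[ℝ] TM (π p))
    (hdπ : ∀ p, Surjective (dπ p))
    (dR : ∀ (p : P) (h : H), TP p ≃ₗ[ℝ] TP (act p h))
    (hcompat : ∀ p h v, dπ p v = vcast TM (hπ p h) (dπ (act p h) (dR p h v)))
    -- fundamental vector fields of `𝔥`, spanning the vertical subspaces:
    (fund : ∀ p : P, 𝔥 →ₗ[ℝ] TP p)
    (hvert : ∀ (p : P) (v : TP p), dπ p v = 0 ↔ ∃ X : 𝔥, fund p X = v)
    -- `ω` is a Cartan connection:
    (ω : ∀ p : P, TP p ≃ₗ[ℝ] 𝔤)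
    (hω_equiv : ∀ (p : P) (h : H) (v : TP p), ω (act p h) (dR p h v) = Ad h⁻¹ (ω p v))
    (hω_fund : ∀ (p : P) (X : 𝔥), ω p (fund p X) = (X : 𝔤)) :
    -- `P` is geometrizable: `TM` is associated to `P` via a representation on `ℝⁿ` …
    (∃ (ρ : H →* ((Fin n → ℝ) ≃ₗ[ℝ] (Fin n → ℝ)))
       (fib : ∀ p : P, (Fin n → ℝ) ≃ₗ[ℝ] TM (π p)),
      ∀ (p : P) (h : H) (w : Fin n → ℝ),
        fib (act p h) w = vcast TM (hπ p h).symm (fib p (ρ h w))) ∧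
    -- … explicitly realized on `𝔤/𝔥` by `[p, ω_p(v) mod 𝔥] ↦ dπ_p(v)`:
    ∃ e : ∀ p : P, (𝔤 ⧸ 𝔥.toSubmodule) ≃ₗ[ℝ] TM (π p),
      (∀ (p : P) (v : TP p), e p (𝔥.toSubmodule.mkQ (ω p v)) = dπ p v) ∧
      (∀ (p : P) (h : H) (ξ : 𝔤 ⧸ 𝔥.toSubmodule),
        vcast TM (hπ p h) (e (act p h) ξ)
          = e p (Submodule.mapQ 𝔥.toSubmodule 𝔥.toSubmodule (Ad h).toLinearMap
              (fun X hX => hAd h X hX) ξ)) := by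
  let S := 𝔥.toSubmodule
  have hker : ∀ p, LinearMap.ker (dπ p ∘ₗ (ω p).symm.toLinearMap) = S := fun p =>
    (ω p).ker_comp_symm_eq_of_ker_eq_range (fund p) (hω_fund p) _ (Submodule.ext (hvert p))
  let e p : (𝔤 ⧸ S) ≃ₗ[ℝ] TM (π p) :=
    S.quotEquivOfKerEq _ ((hdπ p).comp (ω p).symm.surjective) (hker p)
  have he : ∀ p v, e p (S.mkQ (ω p v)) = dπ p v := fun p v => by
    simp only [e, Submodule.quotEquivOfKerEq_mkQ, LinearMap.comp_apply, LinearEquiv.coe_coe,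
      LinearEquiv.symm_apply_apply]
  have hequiv := vcast_fiberMap_act_eq_mapQ Ad hAd π act hπ dπ dR hcompat ω hω_equiv
    (fun p => (e p).toLinearMap) he
  refine ⟨?_, e, he, hequiv⟩
  let AdRep : Representation ℝ H 𝔤 := LinearEquiv.automorphismGroup.toLinearMapMonoidHom.comp Ad
  exact exists_modelFiber_of_equivariant π act hπ (AdRep.quotient S hAd) e hequiv
    ⟨LinearEquiv.ofFinrankEq _ _ ((finrank_fin_fun ℝ).trans hn.symm)⟩

/-- If a principal `H`-bundle `P` over an `n`-dimensional manifold
`M` admits a Cartan connection `ω : TP → 𝔤` for some Lie algebra `𝔤 ⊇ 𝔥` with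
`dim 𝔤 = dim P`, then `P` is geometrizable: there exists a representation
`ρ : H → GL(n,ℝ)` such that `P ×_H ℝⁿ ≅ TM`.  Explicitly, the representation of `H`
on `𝔤/𝔥 ≅ ℝⁿ` induced by `Ad` realizes the isomorphism `P ×_H (𝔤/𝔥) ≅ TM` via
`[p, ω_p(X) mod 𝔥] ↦ π_*(X)`. -/
theorem cartan_connection_implies_geometrizable
    (n : ℕ)
    {𝔤 : Type*} [LieRing 𝔤] [LieAlgebra ℝ 𝔤] [FiniteDimensional ℝ 𝔤]
    (𝔥 : LieSubalgebra ℝ 𝔤)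
    (Ad : H →* (𝔤 ≃ₗ[ℝ] 𝔤))
    (hAd : ∀ (h : H), ∀ X ∈ 𝔥.toSubmodule, Ad h X ∈ 𝔥.toSubmodule)
    (hn : finrank ℝ (𝔤 ⧸ 𝔥.toSubmodule) = n)
    (π : P → M) (act : P → H → P)
    (hact_one : ∀ p, act p 1 = p)
    (hact_mul : ∀ p g h, act (act p g) h = act p (g * h))
    (hπ : ∀ p h, π (act p h) = π p)
    (dπ : ∀ p, TP p →ₗ[ℝ] TM (π p))
    (hdπ : ∀ p, Surjective (dπ p))
    (dR : ∀ (p : P) (h : H), TP p ≃ₗ[ℝ] TP (act p h))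
    (hcompat : ∀ p h v, dπ p v = vcast TM (hπ p h) (dπ (act p h) (dR p h v)))
    -- fundamental vector fields of `𝔥`, spanning the vertical subspaces:
    (fund : ∀ p : P, 𝔥 →ₗ[ℝ] TP p)
    (hvert : ∀ (p : P) (v : TP p), dπ p v = 0 ↔ ∃ X : 𝔥, fund p X = v)
    -- `ω` is a Cartan connection:
    (ω : ∀ p : P, TP p ≃ₗ[ℝ] 𝔤)
    (hω_equiv : ∀ (p : P) (h : H) (v : TP p), ω (act p h) (dR p h v) = Ad h⁻¹ (ω p v))
    (hω_fund : ∀ (p : P) (X : 𝔥), ω p (fund p X) = (X : 𝔤)) :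
    -- `P` is geometrizable: `TM` is associated to `P` via a representation on `ℝⁿ` …
    (∃ (ρ : H →* ((Fin n → ℝ) ≃ₗ[ℝ] (Fin n → ℝ)))
       (fib : ∀ p : P, (Fin n → ℝ) ≃ₗ[ℝ] TM (π p)),
      ∀ (p : P) (h : H) (w : Fin n → ℝ),
        fib (act p h) w = vcast TM (hπ p h).symm (fib p (ρ h w))) ∧
    -- … explicitly realized on `𝔤/𝔥` by `[p, ω_p(v) mod 𝔥] ↦ dπ_p(v)`:
    ∃ e : ∀ p : P, (𝔤 ⧸ 𝔥.toSubmodule) ≃ₗ[ℝ] TM (π p),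
      (∀ (p : P) (v : TP p), e p (𝔥.toSubmodule.mkQ (ω p v)) = dπ p v) ∧
      (∀ (p : P) (h : H) (ξ : 𝔤 ⧸ 𝔥.toSubmodule),
        vcast TM (hπ p h) (e (act p h) ξ)
          = e p (Submodule.mapQ 𝔥.toSubmodule 𝔥.toSubmodule (Ad h).toLinearMap
              (fun X hX => hAd h X hX) ξ)) :=
  cartan_connection_implies_geometrizable_general n 𝔥 Ad hAd hn π act hπ dπ hdπ dR hcompat fund
    hvert ω hω_equiv hω_fund
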